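/- arXiv:2112.13636 — 2 statements merged into one kernel-verified Lean document; each statement's English description precedes it below -/
import Mathlib

section
/- Let H and V be complex Banach spaces, let (T(t))_{t≥0} be a strongly continuous semigroup on H, let (S(t))_{t≥0} be a strongly continuous semigroup on V, and let P(s) ∈ L(V,H), s ≥ 0, satisfy: s ↦ P(s)g is continuous on [0,∞) for every g ∈ V, and P(σ+s) = P(σ)S(s) for all σ, s ≥ 0. Define R(t)g := ∫₀^t T(t−σ)P(σ)g dσ (Bochner integral) for t ≥ 0, g ∈ V. Then each R(t) is a bounded linear operator from V to H, R(0) = 0, t ↦ R(t)g is continuous for every g ∈ V, and R(t+s) = T(t)R(s) + R(t)S(s) for all t, s ≥ 0. -/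
/-!
By the uniform boundedness principle a strongly continuous family of operators on a Banach
space is locally bounded in norm, hence jointly continuous in (time, vector). After extending
`T` and `P` constantly to negative times, the integrand `(t, σ) ↦ T(t - σ) P(σ) g` is therefore
jointly continuous, which gives the continuity of `t ↦ R(t) g` and, with the norm bounds on
`[0, t]`, the boundedness of `R(t)`.

For the cocycle identity split `∫₀^{t+s}` at `s`: on `[0, s]` the semigroup law
`T(t + s - σ) = T(t) T(s - σ)` pulls `T(t)` out of the integral, and on `[s, t + s]` the
substitution `σ = τ + s` together with `P(τ + s) = P(τ) S(s)` turns the integral into `R(t) S(s) g`.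
-/

open Set Filter Topology

section UniformBoundedness

variable {X 𝕜 E F : Type*} [TopologicalSpace X] [NontriviallyNormedField 𝕜]
  [NormedAddCommGroup E] [NormedSpace 𝕜 E] [CompleteSpace E]
  [NormedAddCommGroup F] [NormedSpace 𝕜 F] {A : X → E →L[𝕜] F}

theorem IsCompact.exists_bound_of_continuousOn_apply {K : Set X} (hK : IsCompact K)
    (hA : ∀ x, ContinuousOn (fun u => A u x) K) : ∃ C, ∀ u ∈ K, ‖A u‖ ≤ C := by
  obtain ⟨C, hC⟩ := banach_steinhaus (g := fun u : K => A u) fun x => by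
    obtain ⟨C, hC⟩ := (hK.image_of_continuousOn (hA x).norm).bddAbove
    exact ⟨C, fun u => hC ⟨u, u.2, rfl⟩⟩
  exact ⟨C, fun u hu => hC ⟨u, hu⟩⟩

theorem continuous_uncurry_apply_of_continuous_apply [LocallyCompactSpace X]
    (hA : ∀ x, Continuous fun u => A u x) : Continuous fun p : X × E => A p.1 p.2 := by
  refine continuous_iff_continuousAt.2 fun ⟨u₀, x₀⟩ => ?_
  obtain ⟨K, hK, hKu₀⟩ := exists_compact_mem_nhds u₀
  obtain ⟨C, hC⟩ := hK.exists_bound_of_continuousOn_apply fun x => (hA x).continuousOn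
  have h_fixed : Tendsto (fun p : X × E => A p.1 x₀) (𝓝 (u₀, x₀)) (𝓝 (A u₀ x₀)) :=
    ((hA x₀).comp continuous_fst).tendsto _
  have h_small : Tendsto (fun p : X × E => A p.1 (p.2 - x₀)) (𝓝 (u₀, x₀)) (𝓝 0) := by
    refine squeeze_zero_norm' ?_ (?_ : Tendsto (fun p : X × E => C * ‖p.2 - x₀‖) _ (𝓝 0))
    · filter_upwards [prod_mem_nhds hKu₀ univ_mem] with p hp
      exact (A p.1).le_of_opNorm_le (hC _ hp.1) _
    · exact ((continuous_snd.sub continuous_const).norm.const_mul C).tendsto' _ _ (by simp)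
  simpa [ContinuousAt] using h_fixed.add h_small

end UniformBoundedness

section Duhamel

variable {𝕜 H V : Type*} [RCLike 𝕜]
  [NormedAddCommGroup H] [NormedSpace 𝕜 H] [NormedAddCommGroup V] [NormedSpace 𝕜 V]
  {T : ℝ → H →L[𝕜] H} {P : ℝ → V →L[𝕜] H}
  (hT : ∀ x, Continuous fun u => T u x) (hP : ∀ g, Continuous fun u => P u g)

section Integrand

variable [CompleteSpace H]
include hT hP

theorem continuous_duhamel_integrand (g : V) :
    Continuous fun p : ℝ × ℝ => T (p.1 - p.2) (P p.2 g) :=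
  (continuous_uncurry_apply_of_continuous_apply hT).comp
    ((continuous_fst.sub continuous_snd).prodMk ((hP g).comp continuous_snd))

theorem intervalIntegrable_duhamel_integrand (t : ℝ) (g : V) (a b : ℝ) :
    IntervalIntegrable (fun σ => T (t - σ) (P σ g)) MeasureTheory.volume a b :=
  ((continuous_duhamel_integrand hT hP g).comp
    (continuous_const.prodMk continuous_id)).intervalIntegrable a b

end Integrand

variable [NormedSpace ℝ H]

noncomputable def duhamel (T : ℝ → H →L[𝕜] H) (P : ℝ → V →L[𝕜] H) (t : ℝ) (g : V) : H :=
  ∫ σ in (0:ℝ)..t, T (t - σ) (P σ g)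

theorem duhamel_congr {T' : ℝ → H →L[𝕜] H} {P' : ℝ → V →L[𝕜] H}
    (hT_eq : EqOn T T' (Ici 0)) (hP_eq : EqOn P P' (Ici 0)) {t : ℝ} (ht : 0 ≤ t) :
    duhamel T P t = duhamel T' P' t := by
  funext g
  refine intervalIntegral.integral_congr fun σ hσ => ?_
  rw [uIcc_of_le ht] at hσ
  simp only [hT_eq (sub_nonneg.2 hσ.2), hP_eq hσ.1]

theorem norm_duhamel_le {t M N : ℝ} (ht : 0 ≤ t) (hM : ∀ u ∈ Icc 0 t, ‖T u‖ ≤ M)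
    (hN : ∀ u ∈ Icc 0 t, ‖P u‖ ≤ N) (g : V) : ‖duhamel T P t g‖ ≤ M * N * t * ‖g‖ := by
  have hM₀ : 0 ≤ M := (norm_nonneg _).trans (hM 0 ⟨le_rfl, ht⟩)
  have h_pointwise : ∀ σ ∈ uIoc 0 t, ‖T (t - σ) (P σ g)‖ ≤ M * (N * ‖g‖) := by
    intro σ hσ
    rw [uIoc_of_le ht] at hσ
    calc ‖T (t - σ) (P σ g)‖ ≤ M * ‖P σ g‖ :=
          (T _).le_of_opNorm_le (hM _ ⟨by linarith [hσ.2], by linarith [hσ.1]⟩) _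
      _ ≤ M * (N * ‖g‖) :=
          mul_le_mul_of_nonneg_left ((P σ).le_of_opNorm_le (hN _ ⟨hσ.1.le, hσ.2⟩) g) hM₀
  calc ‖duhamel T P t g‖ ≤ M * (N * ‖g‖) * |t - 0| :=
        intervalIntegral.norm_integral_le_of_norm_le_const h_pointwise
    _ = M * N * t * ‖g‖ := by rw [sub_zero, abs_of_nonneg ht]; ring

theorem duhamel_smul [SMulCommClass ℝ 𝕜 H] (t : ℝ) (c : 𝕜) (g : V) :
    duhamel T P t (c • g) = c • duhamel T P t g := by
  simp only [duhamel, map_smul, intervalIntegral.integral_smul]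

variable [CompleteSpace H]
include hT hP

theorem continuous_duhamel (g : V) : Continuous fun t => duhamel T P t g :=
  intervalIntegral.continuous_parametric_intervalIntegral_of_continuous
    (continuous_duhamel_integrand hT hP g) continuous_id

theorem duhamel_add (t : ℝ) (g g' : V) :
    duhamel T P t (g + g') = duhamel T P t g + duhamel T P t g' := by
  simp only [duhamel, map_add]
  exact intervalIntegral.integral_add (intervalIntegrable_duhamel_integrand hT hP t g 0 t)
    (intervalIntegrable_duhamel_integrand hT hP t g' 0 t)

theorem exists_continuousLinearMap_eq_duhamel [CompleteSpace V] [SMulCommClass ℝ 𝕜 H]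
    {t : ℝ} (ht : 0 ≤ t) : ∃ R : V →L[𝕜] H, ∀ g, R g = duhamel T P t g := by
  obtain ⟨M, hM⟩ := isCompact_Icc.exists_bound_of_continuousOn_apply fun x => (hT x).continuousOn
  obtain ⟨N, hN⟩ := isCompact_Icc.exists_bound_of_continuousOn_apply fun g => (hP g).continuousOn
  exact ⟨LinearMap.mkContinuous
    { toFun := duhamel T P t
      map_add' := duhamel_add hT hP t
      map_smul' := duhamel_smul t } _ (norm_duhamel_le ht hM hN), fun _ => rfl⟩

theorem duhamel_add_time {S : ℝ → V →L[𝕜] V}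
    (hT_add : ∀ t s, 0 ≤ t → 0 ≤ s → T (t + s) = (T t).comp (T s))
    (hPS : ∀ σ s, 0 ≤ σ → 0 ≤ s → P (σ + s) = (P σ).comp (S s))
    {t s : ℝ} (ht : 0 ≤ t) (hs : 0 ≤ s) (g : V) :
    duhamel T P (t + s) g = T t (duhamel T P s g) + duhamel T P t (S s g) := by
  have hint := intervalIntegrable_duhamel_integrand hT hP (t + s) g
  rw [duhamel, ← intervalIntegral.integral_add_adjacent_intervals (hint 0 s) (hint s (t + s))]
  congr 1
  · rw [duhamel, ← (T t).intervalIntegral_comp_comm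
      (intervalIntegrable_duhamel_integrand hT hP s g 0 s)]
    refine intervalIntegral.integral_congr fun σ hσ => ?_
    rw [uIcc_of_le hs] at hσ
    simp only [add_sub_assoc, hT_add t (s - σ) ht (sub_nonneg.2 hσ.2)]
    rfl
  · have h_shift := intervalIntegral.integral_comp_add_right
      (fun σ => T (t + s - σ) (P σ g)) s (a := 0) (b := t)
    rw [zero_add] at h_shift
    rw [← h_shift]
    refine intervalIntegral.integral_congr fun τ hτ => ?_
    rw [uIcc_of_le ht] at hτ
    simp only [add_sub_add_right_eq_sub, hPS τ s hτ.1 hs]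
    rfl

end Duhamel

theorem stmt4_general {H V : Type*}
    [NormedAddCommGroup H] [NormedSpace ℂ H] [CompleteSpace H]
    [NormedAddCommGroup V] [NormedSpace ℂ V] [CompleteSpace V]
    (T : ℝ → H →L[ℂ] H) (S : ℝ → V →L[ℂ] V)
    (hTsg : ∀ t s : ℝ, 0 ≤ t → 0 ≤ s → T (t + s) = (T t).comp (T s))
    (hTc : ∀ x : H, ContinuousOn (fun t => T t x) (Set.Ici 0))
    (P : ℝ → V →L[ℂ] H)
    (hPc : ∀ g : V, ContinuousOn (fun s => P s g) (Set.Ici 0))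
    (hPint : ∀ σ s : ℝ, 0 ≤ σ → 0 ≤ s → P (σ + s) = (P σ).comp (S s)) :
    -- each `R(t)` is a bounded linear operator from `V` to `H`
    (∀ t : ℝ, 0 ≤ t → ∃ Rt : V →L[ℂ] H, ∀ g : V,
        Rt g = ∫ σ in (0:ℝ)..t, T (t - σ) (P σ g)) ∧
    -- `R(0) = 0`
    (∀ g : V, (∫ σ in (0:ℝ)..(0:ℝ), T (0 - σ) (P σ g)) = 0) ∧
    -- strong continuity of `t ↦ R(t)g`
    (∀ g : V, ContinuousOn
        (fun t => ∫ σ in (0:ℝ)..t, T (t - σ) (P σ g)) (Set.Ici 0)) ∧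
    -- the cocycle identity `R(t+s) = T(t)R(s) + R(t)S(s)`
    (∀ t s : ℝ, 0 ≤ t → 0 ≤ s → ∀ g : V,
        (∫ σ in (0:ℝ)..(t + s), T (t + s - σ) (P σ g)) =
          T t (∫ σ in (0:ℝ)..s, T (s - σ) (P σ g)) +
            ∫ σ in (0:ℝ)..t, T (t - σ) (P σ (S s g))) := by
  set T' : ℝ → H →L[ℂ] H := fun u => T (max u 0)
  set P' : ℝ → V →L[ℂ] H := fun u => P (max u 0)
  have hmax : Continuous fun u : ℝ => max u 0 := continuous_id.max continuous_const
  have hT' : ∀ x, Continuous fun u => T' u x :=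
    fun x => (hTc x).comp_continuous hmax fun u => le_max_right u 0
  have hP' : ∀ g, Continuous fun u => P' u g :=
    fun g => (hPc g).comp_continuous hmax fun u => le_max_right u 0
  have hTT' : EqOn T T' (Ici 0) := fun u hu => by simp only [T', max_eq_left (mem_Ici.1 hu)]
  have hPP' : EqOn P P' (Ici 0) := fun u hu => by simp only [P', max_eq_left (mem_Ici.1 hu)]
  have hR : ∀ t, 0 ≤ t → duhamel T P t = duhamel T' P' t :=
    fun t ht => duhamel_congr hTT' hPP' ht
  refine ⟨fun t ht => ?_, fun g => intervalIntegral.integral_same, fun g => ?_,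
    fun t s ht hs g => ?_⟩
  · obtain ⟨R, hR_eq⟩ := exists_continuousLinearMap_eq_duhamel hT' hP' ht
    exact ⟨R, fun g => (hR_eq g).trans (congrFun (hR t ht) g).symm⟩
  · exact (continuous_duhamel hT' hP' g).continuousOn.congr fun t ht => congrFun (hR t ht) g
  · have hT'_add : ∀ t s, 0 ≤ t → 0 ≤ s → T' (t + s) = (T' t).comp (T' s) := fun t s ht hs => by
      rw [← hTT' ht, ← hTT' hs, ← hTT' (add_nonneg ht hs), hTsg t s ht hs]
    have hP'S : ∀ σ s, 0 ≤ σ → 0 ≤ s → P' (σ + s) = (P' σ).comp (S s) := fun σ s hσ hs => by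
      rw [← hPP' hσ, ← hPP' (add_nonneg hσ hs), hPint σ s hσ hs]
    have h_cocycle := duhamel_add_time hT' hP' hT'_add hP'S ht hs g
    rwa [← hR _ (add_nonneg ht hs), ← hR s hs, ← hR t ht, ← hTT' ht] at h_cocycle

/-- change-of-variables cocycle identity in the proof of
Proposition 3.3 of the paper.
Let `(T(t))_{t≥0}` and `(S(t))_{t≥0}` be strongly continuous semigroups on the complex
Banach spaces `H` and `V`, and let `P(s) ∈ L(V,H)` (`s ≥ 0`) be strongly continuous
and satisfy the intertwining relation `P(σ+s) = P(σ)S(s)`.  Then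
`R(t)g := ∫₀^t T(t−σ)P(σ)g dσ` defines bounded linear operators `R(t) : V → H` with
`R(0) = 0`, `t ↦ R(t)g` continuous on `[0,∞)`, and
`R(t+s) = T(t)R(s) + R(t)S(s)` for all `t, s ≥ 0`. -/
theorem stmt4 {H V : Type*}
    [NormedAddCommGroup H] [NormedSpace ℂ H] [CompleteSpace H]
    [NormedAddCommGroup V] [NormedSpace ℂ V] [CompleteSpace V]
    (T : ℝ → H →L[ℂ] H) (S : ℝ → V →L[ℂ] V)
    (hT0 : T 0 = ContinuousLinearMap.id ℂ H)
    (hTsg : ∀ t s : ℝ, 0 ≤ t → 0 ≤ s → T (t + s) = (T t).comp (T s))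
    (hTc : ∀ x : H, ContinuousOn (fun t => T t x) (Set.Ici 0))
    (hS0 : S 0 = ContinuousLinearMap.id ℂ V)
    (hSsg : ∀ t s : ℝ, 0 ≤ t → 0 ≤ s → S (t + s) = (S t).comp (S s))
    (hSc : ∀ g : V, ContinuousOn (fun t => S t g) (Set.Ici 0))
    (P : ℝ → V →L[ℂ] H)
    (hPc : ∀ g : V, ContinuousOn (fun s => P s g) (Set.Ici 0))
    (hPint : ∀ σ s : ℝ, 0 ≤ σ → 0 ≤ s → P (σ + s) = (P σ).comp (S s)) :
    -- each `R(t)` is a bounded linear operator from `V` to `H`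
    (∀ t : ℝ, 0 ≤ t → ∃ Rt : V →L[ℂ] H, ∀ g : V,
        Rt g = ∫ σ in (0:ℝ)..t, T (t - σ) (P σ g)) ∧
    -- `R(0) = 0`
    (∀ g : V, (∫ σ in (0:ℝ)..(0:ℝ), T (0 - σ) (P σ g)) = 0) ∧
    -- strong continuity of `t ↦ R(t)g`
    (∀ g : V, ContinuousOn
        (fun t => ∫ σ in (0:ℝ)..t, T (t - σ) (P σ g)) (Set.Ici 0)) ∧
    -- the cocycle identity `R(t+s) = T(t)R(s) + R(t)S(s)`
    (∀ t s : ℝ, 0 ≤ t → 0 ≤ s → ∀ g : V,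
        (∫ σ in (0:ℝ)..(t + s), T (t + s - σ) (P σ g)) =
          T t (∫ σ in (0:ℝ)..s, T (s - σ) (P σ g)) +
            ∫ σ in (0:ℝ)..t, T (t - σ) (P σ (S s g))) :=
  stmt4_general T S hTsg hTc P hPc hPint
end

section
/- Let H and 𝒰 be complex Hilbert spaces, r > 0, 𝒵 a linear subspace of H, A_m : 𝒵 → H and G : 𝒵 → 𝒰 linear maps, λ ∈ ℂ, and 𝔻_λ : 𝒰 → H a linear map whose range is contained in {x ∈ 𝒵 : A_m x = λ x}, with G(𝔻_λ u) = u for every u ∈ 𝒰 and x = 𝔻_λ(G x) for every x ∈ 𝒵 with A_m x = λ x. Let L be a linear map from continuously differentiable 𝒰-valued functions on [−r,0] into 𝒰, and for v ∈ 𝒰 let e_λ v denote the function θ ↦ e^{λθ} v on [−r,0]. Then for x ∈ 𝒵 and continuously differentiable g : [−r,0] → 𝒰 with G x = L g, one has A_m x = λ x and g′(θ) = λ g(θ) for all θ ∈ [−r,0] if and only if g = e_λ(g(0)) and x = 𝔻_λ(L(e_λ (g(0)))). Consequently, for every v ∈ 𝒰 the pair (𝔻_λ(L(e_λ v)), e_λ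 v) is the unique element (x,g) of {(x,g) : x ∈ 𝒵, g continuously differentiable, G x = L g, A_m x = λ x, g′ = λ g} with g(0) = v. -/
/-!
The boundary map inverts the Dirichlet operator on eigenvectors: `A_m x = λ x` iff
`x = 𝔻_λ (G x)`. On `[−r,0]` the equation `g' = λ g` forces `g = e_λ (g 0)`, because
`e^{−λθ} g(θ)` has zero derivative. Since `L` only sees `[−r,0]`, `G x = L g = L (e_λ (g 0))`,
and both directions, as well as existence and uniqueness, follow.
-/

open Set

section ExponentialSolution

variable {E : Type*} [NormedAddCommGroup E] [NormedSpace ℂ E] (lam : ℂ)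

theorem hasDerivAt_cexp_mul_ofReal (θ : ℝ) :
    HasDerivAt (fun t : ℝ => Complex.exp (lam * t)) (lam * Complex.exp (lam * θ)) θ := by
  simpa [mul_comm] using ((Complex.ofRealCLM.hasDerivAt (x := θ)).const_mul lam).cexp

theorem hasDerivAt_cexp_mul_ofReal_smul (v : E) (θ : ℝ) :
    HasDerivAt (fun t : ℝ => Complex.exp (lam * t) • v) (lam • Complex.exp (lam * θ) • v) θ := by
  simpa [smul_smul] using (hasDerivAt_cexp_mul_ofReal lam θ).smul_const v

theorem contDiff_cexp_mul_ofReal_smul (v : E) {n : WithTop ℕ∞} :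
    ContDiff ℝ n (fun t : ℝ => Complex.exp (lam * t) • v) := by
  have : ContDiff ℝ n (fun t : ℝ => (t : ℂ)) := Complex.ofRealCLM.contDiff
  fun_prop

theorem eq_cexp_smul_of_hasDerivWithinAt {s : Set ℝ} (hs : Convex ℝ s) {g : ℝ → E}
    (hg : ∀ θ ∈ s, HasDerivWithinAt g (lam • g θ) s θ) {θ₀ θ : ℝ} (hθ₀ : θ₀ ∈ s)
    (hθ : θ ∈ s) : g θ = Complex.exp (lam * (θ - θ₀)) • g θ₀ := by
  set f : ℝ → E := fun t => Complex.exp (-lam * t) • g t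
  have hf : ∀ t ∈ s, HasDerivWithinAt f 0 s t := fun t ht => by
    convert (hasDerivAt_cexp_mul_ofReal (-lam) t).hasDerivWithinAt.smul (hg t ht) using 1
    · rfl
    rw [smul_smul, ← add_smul]
    ring_nf
    simp
  have hconst : f θ = f θ₀ := by
    simpa [sub_eq_zero] using
      hs.norm_image_sub_le_of_norm_hasDerivWithin_le hf (C := 0) (by simp) hθ₀ hθ
  calc g θ = Complex.exp (lam * θ) • f θ := by simp [f, smul_smul, ← Complex.exp_add]
    _ = Complex.exp (lam * θ) • f θ₀ := by rw [hconst]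
    _ = Complex.exp (lam * (θ - θ₀)) • g θ₀ := by
      simp only [f, smul_smul, ← Complex.exp_add]
      ring_nf

theorem hasDerivWithinAt_smul_iff_eq_cexp_smul {a : ℝ} {g : ℝ → E} :
    (∀ θ ∈ Icc a 0, HasDerivWithinAt g (lam • g θ) (Icc a 0) θ) ↔
      ∀ θ ∈ Icc a 0, g θ = Complex.exp (lam * θ) • g 0 := by
  refine ⟨fun hg θ hθ => ?_, fun hg θ hθ => ?_⟩
  · simpa using eq_cexp_smul_of_hasDerivWithinAt lam (convex_Icc a 0) hg
      ⟨hθ.1.trans hθ.2, le_rfl⟩ hθ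
  · rw [hg θ hθ]
    exact (hasDerivAt_cexp_mul_ofReal_smul lam (g 0) θ).hasDerivWithinAt.congr hg (hg θ hθ)

end ExponentialSolution

theorem apply_eq_smul_iff_eq_dirichlet {R H U : Type*} [Semiring R] [AddCommMonoid H]
    [Module R H] [AddCommMonoid U] [Module R U] {Z : Submodule R H} {Am : Z →ₗ[R] H} {G : Z →ₗ[R] U}
    {lam : R} {D : U →ₗ[R] H}
    (hD₁ : ∀ u, ∃ z : Z, (z : H) = D u ∧ Am z = lam • (z : H))
    (hD₂ : ∀ z : Z, Am z = lam • (z : H) → D (G z) = z) (x : Z) :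
    Am x = lam • (x : H) ↔ (x : H) = D (G x) := by
  refine ⟨fun hx => (hD₂ x hx).symm, fun hx => ?_⟩
  obtain ⟨z, hzD, hzA⟩ := hD₁ (G x)
  obtain rfl : x = z := Subtype.ext (hx.trans hzD.symm)
  exact hzA

theorem stmt5_general
    {H 𝒰 : Type*} [NormedAddCommGroup H] [InnerProductSpace ℂ H]
    [NormedAddCommGroup 𝒰] [InnerProductSpace ℂ 𝒰]
    (r : ℝ)
    (𝒵 : Submodule ℂ H) (Am : 𝒵 →ₗ[ℂ] H) (G : 𝒵 →ₗ[ℂ] 𝒰) (lam : ℂ)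
    -- the Dirichlet operator `𝔻 = 𝔻_λ : 𝒰 → H`
    (𝔻 : 𝒰 →ₗ[ℂ] H)
    (h𝔻1 : ∀ u : 𝒰, ∃ z : 𝒵, (z : H) = 𝔻 u ∧ Am z = lam • (z : H) ∧ G z = u)
    (h𝔻2 : ∀ z : 𝒵, Am z = lam • (z : H) → 𝔻 (G z) = (z : H))
    -- the delay operator `L`, defined on continuously differentiable functions and
    -- depending only on the values on `[−r,0]`
    (L : (ℝ → 𝒰) →ₗ[ℂ] 𝒰)
    (hLres : ∀ g₁ g₂ : ℝ → 𝒰, (∀ θ ∈ Set.Icc (-r) 0, g₁ θ = g₂ θ) → L g₁ = L g₂) :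
    -- the equivalence
    (∀ (x : 𝒵) (g : ℝ → 𝒰), ContDiffOn ℝ 1 g (Set.Icc (-r) 0) → G x = L g →
      ((Am x = lam • (x : H) ∧
          ∀ θ ∈ Set.Icc (-r) 0,
            HasDerivWithinAt g (lam • g θ) (Set.Icc (-r) 0) θ) ↔
        ((∀ θ ∈ Set.Icc (-r) 0, g θ = Complex.exp (lam * (θ : ℂ)) • g 0) ∧
          (x : H) = 𝔻 (L (fun θ : ℝ => Complex.exp (lam * (θ : ℂ)) • g 0))))) ∧
    -- existence and uniqueness
    (∀ v : 𝒰,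
      (∃ (x : 𝒵) (g : ℝ → 𝒰),
        ContDiffOn ℝ 1 g (Set.Icc (-r) 0) ∧ G x = L g ∧
        Am x = lam • (x : H) ∧
        (∀ θ ∈ Set.Icc (-r) 0,
          HasDerivWithinAt g (lam • g θ) (Set.Icc (-r) 0) θ) ∧
        g 0 = v ∧ g = (fun θ : ℝ => Complex.exp (lam * (θ : ℂ)) • v) ∧
        (x : H) = 𝔻 (L (fun θ : ℝ => Complex.exp (lam * (θ : ℂ)) • v))) ∧
      (∀ (x₁ x₂ : 𝒵) (g₁ g₂ : ℝ → 𝒰),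
        ContDiffOn ℝ 1 g₁ (Set.Icc (-r) 0) → G x₁ = L g₁ →
        Am x₁ = lam • (x₁ : H) →
        (∀ θ ∈ Set.Icc (-r) 0,
          HasDerivWithinAt g₁ (lam • g₁ θ) (Set.Icc (-r) 0) θ) →
        g₁ 0 = v →
        ContDiffOn ℝ 1 g₂ (Set.Icc (-r) 0) → G x₂ = L g₂ →
        Am x₂ = lam • (x₂ : H) →
        (∀ θ ∈ Set.Icc (-r) 0,
          HasDerivWithinAt g₂ (lam • g₂ θ) (Set.Icc (-r) 0) θ) →
        g₂ 0 = v →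
        x₁ = x₂ ∧ ∀ θ ∈ Set.Icc (-r) 0, g₁ θ = g₂ θ)) := by
  refine ⟨fun x g _ hGx => ?_, fun v => ⟨?_, ?_⟩⟩
  · rw [hasDerivWithinAt_smul_iff_eq_cexp_smul]
    refine and_comm.trans (and_congr_right fun hE => ?_)
    have h𝔻 (u : 𝒰) := (h𝔻1 u).imp fun _ => And.imp_right And.left
    rw [apply_eq_smul_iff_eq_dirichlet h𝔻 h𝔻2, hGx, hLres _ _ hE]
  · obtain ⟨z, hz𝔻, hzA, hzG⟩ := h𝔻1 (L fun θ : ℝ => Complex.exp (lam * θ) • v)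
    exact ⟨z, _, (contDiff_cexp_mul_ofReal_smul lam v).contDiffOn, hzG, hzA,
      fun θ _ => (hasDerivAt_cexp_mul_ofReal_smul lam v θ).hasDerivWithinAt, by simp, rfl, hz𝔻⟩
  · intro x₁ x₂ g₁ g₂ _ hG₁ hA₁ hD₁ rfl _ hG₂ hA₂ hD₂ hg₂
    have hE₁ := (hasDerivWithinAt_smul_iff_eq_cexp_smul lam).1 hD₁
    have hE₂ := (hasDerivWithinAt_smul_iff_eq_cexp_smul lam).1 hD₂
    rw [hg₂] at hE₂
    refine ⟨Subtype.ext ?_, fun θ hθ => (hE₁ θ hθ).trans (hE₂ θ hθ).symm⟩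
    rw [← h𝔻2 x₁ hA₁, ← h𝔻2 x₂ hA₂, hG₁, hG₂, hLres _ _ hE₁, hLres _ _ hE₂]

/-- equation (3.8) in the proof of Theorem 3.5 of the paper:
computation of the Dirichlet operator of the augmented delay system.
With `e_λ v = (θ ↦ e^{λθ} v)`, for `x ∈ 𝒵` and a continuously differentiable
`g : [−r,0] → 𝒰` with `G x = L g`, one has `A_m x = λ x` and `g′ = λ g` on `[−r,0]`
iff `g = e_λ (g 0)` on `[−r,0]` and `x = 𝔻_λ (L (e_λ (g 0)))`.
Consequently `(𝔻_λ (L (e_λ v)), e_λ v)` is the unique element `(x,g)` of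
`ker (λ − 𝒜_m)` with `g 0 = v`. -/
theorem stmt5
    {H 𝒰 : Type*} [NormedAddCommGroup H] [InnerProductSpace ℂ H] [CompleteSpace H]
    [NormedAddCommGroup 𝒰] [InnerProductSpace ℂ 𝒰] [CompleteSpace 𝒰]
    (r : ℝ) (hr : 0 < r)
    (𝒵 : Submodule ℂ H) (Am : 𝒵 →ₗ[ℂ] H) (G : 𝒵 →ₗ[ℂ] 𝒰) (lam : ℂ)
    -- the Dirichlet operator `𝔻 = 𝔻_λ : 𝒰 → H`
    (𝔻 : 𝒰 →ₗ[ℂ] H)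
    (h𝔻1 : ∀ u : 𝒰, ∃ z : 𝒵, (z : H) = 𝔻 u ∧ Am z = lam • (z : H) ∧ G z = u)
    (h𝔻2 : ∀ z : 𝒵, Am z = lam • (z : H) → 𝔻 (G z) = (z : H))
    -- the delay operator `L`, defined on continuously differentiable functions and
    -- depending only on the values on `[−r,0]`
    (L : (ℝ → 𝒰) →ₗ[ℂ] 𝒰)
    (hLres : ∀ g₁ g₂ : ℝ → 𝒰, (∀ θ ∈ Set.Icc (-r) 0, g₁ θ = g₂ θ) → L g₁ = L g₂) :
    -- the equivalence
    (∀ (x : 𝒵) (g : ℝ → 𝒰), ContDiffOn ℝ 1 g (Set.Icc (-r) 0) → G x = L g →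
      ((Am x = lam • (x : H) ∧
          ∀ θ ∈ Set.Icc (-r) 0,
            HasDerivWithinAt g (lam • g θ) (Set.Icc (-r) 0) θ) ↔
        ((∀ θ ∈ Set.Icc (-r) 0, g θ = Complex.exp (lam * (θ : ℂ)) • g 0) ∧
          (x : H) = 𝔻 (L (fun θ : ℝ => Complex.exp (lam * (θ : ℂ)) • g 0))))) ∧
    -- existence and uniqueness
    (∀ v : 𝒰,
      (∃ (x : 𝒵) (g : ℝ → 𝒰),
        ContDiffOn ℝ 1 g (Set.Icc (-r) 0) ∧ G x = L g ∧
        Am x = lam • (x : H) ∧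
        (∀ θ ∈ Set.Icc (-r) 0,
          HasDerivWithinAt g (lam • g θ) (Set.Icc (-r) 0) θ) ∧
        g 0 = v ∧ g = (fun θ : ℝ => Complex.exp (lam * (θ : ℂ)) • v) ∧
        (x : H) = 𝔻 (L (fun θ : ℝ => Complex.exp (lam * (θ : ℂ)) • v))) ∧
      (∀ (x₁ x₂ : 𝒵) (g₁ g₂ : ℝ → 𝒰),
        ContDiffOn ℝ 1 g₁ (Set.Icc (-r) 0) → G x₁ = L g₁ →
        Am x₁ = lam • (x₁ : H) →
        (∀ θ ∈ Set.Icc (-r) 0,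
          HasDerivWithinAt g₁ (lam • g₁ θ) (Set.Icc (-r) 0) θ) →
        g₁ 0 = v →
        ContDiffOn ℝ 1 g₂ (Set.Icc (-r) 0) → G x₂ = L g₂ →
        Am x₂ = lam • (x₂ : H) →
        (∀ θ ∈ Set.Icc (-r) 0,
          HasDerivWithinAt g₂ (lam • g₂ θ) (Set.Icc (-r) 0) θ) →
        g₂ 0 = v →
        x₁ = x₂ ∧ ∀ θ ∈ Set.Icc (-r) 0, g₁ θ = g₂ θ)) :=
  stmt5_general r 𝒵 Am G lam 𝔻 h𝔻1 h𝔻2 L hLres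
end
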